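/- arXiv:2401.17060 — 3 statements merged into one kernel-verified Lean document; each statement's English description precedes it below -/
import Mathlib

section
/- Let $(\alpha_n)_{n\geq 1}$ be a square-summable sequence of complex numbers and $(r_n)_{n\geq 1}$ a bounded sequence of real numbers. Then for almost every $x \in \mathbb{R} \setminus \{r_n : n \in \mathbb{N}\}$, the series $\sum_{n\geq 1} (\log |r_n - x|)^2 |\alpha_n|^2$ converges. -/
open MeasureTheory Metric
open scoped ENNReal

/-!
Near `0`, `(log |t|)² ≤ C |t|^(-1/2)`, so `(log |t|)²` is locally integrable. By Tonelli and
translation invariance, the integral over a ball of `∑ c n (log |x - r n|)²` is at most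
`∑ c n` times the integral of `(log |t|)²` over a larger ball, since the `r n` are bounded.
Being finite, this integral forces the series to converge almost everywhere.
-/

namespace Real

theorem log_sq_le_mul_rpow_neg_half {u : ℝ} (hu : 0 < u) :
    log u ^ 2 ≤ 16 * max 1 u ^ 2 * u ^ (-(1 / 2) : ℝ) := by
  have hquarter : (u ^ (1 / 4 : ℝ)) ^ 2 = u ^ (1 / 2 : ℝ) := by
    rw [← rpow_natCast, ← rpow_mul hu.le]; norm_num
  have hbound : |u ^ (1 / 4 : ℝ) * log u| ≤ 4 * max 1 u := by
    rcases le_total u 1 with hu1 | hu1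
    · have := abs_log_mul_self_rpow_lt u (1 / 4) hu hu1 (by norm_num)
      rw [mul_comm] at this
      nlinarith [le_max_left 1 u]
    · have hlog : log u ≤ u ^ (1 / 4 : ℝ) / (1 / 4) := log_le_rpow_div hu.le (by norm_num)
      have hsqrt : u ^ (1 / 2 : ℝ) ≤ u := by
        simpa using rpow_le_rpow_of_exponent_le hu1 (show (1 / 2 : ℝ) ≤ 1 by norm_num)
      rw [abs_of_nonneg (mul_nonneg (by positivity) (log_nonneg hu1))]
      nlinarith [le_max_right 1 u, rpow_nonneg hu.le (1 / 4 : ℝ)]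
  have hsq : u ^ (1 / 2 : ℝ) * log u ^ 2 ≤ 16 * max 1 u ^ 2 := by
    rw [← hquarter, ← mul_pow, ← sq_abs]
    nlinarith [abs_nonneg (u ^ (1 / 4 : ℝ) * log u)]
  rw [rpow_neg hu.le, ← div_eq_mul_inv, le_div_iff₀ (by positivity)]
  linarith

end Real

theorem locallyIntegrable_log_norm_sq {E : Type*} [NormedAddCommGroup E] [NormedSpace ℝ E]
    [FiniteDimensional ℝ E] [Nontrivial E] [MeasurableSpace E] [BorelSpace E]
    (μ : Measure E) [μ.IsAddHaarMeasure] :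
    LocallyIntegrable (fun x : E => Real.log ‖x‖ ^ 2) μ := by
  have hdim : 1 ≤ Module.finrank ℝ E := Module.finrank_pos
  rw [locallyIntegrable_iff]
  intro K hK
  obtain ⟨R, -, hKR⟩ := hK.isBounded.exists_pos_norm_lt
  refine (integrableOn_ball_of_norm_le_rpow (C := 16 * max 1 R ^ 2) (α := 1 / 2) hdim ?_
    (ae_restrict_of_forall_mem measurableSet_ball fun x hx => ?_) ?_).mono_set
    fun x hx => mem_ball_zero_iff.2 (hKR x hx)
  · exact lt_of_lt_of_le (by norm_num) (Nat.one_le_cast.2 hdim)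
  · rcases eq_or_ne x 0 with rfl | hx0
    · simp
    have hxR : ‖x‖ < R := mem_ball_zero_iff.1 hx
    rw [Real.norm_of_nonneg (sq_nonneg _)]
    refine (Real.log_sq_le_mul_rpow_neg_half (norm_pos_iff.2 hx0)).trans ?_
    gcongr
  · exact ((Real.measurable_log.comp measurable_norm).pow_const 2).aestronglyMeasurable

section Translates

variable {G : Type*} [NormedAddCommGroup G] [MeasurableSpace G] [MeasurableAdd G]
  {μ : Measure G} [μ.IsAddRightInvariant]

theorem setLIntegral_closedBall_comp_sub_le {g : G → ℝ≥0∞} {a : G} {R C : ℝ} (ha : ‖a‖ ≤ C) :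
    ∫⁻ x in closedBall 0 R, g (x - a) ∂μ ≤ ∫⁻ y in closedBall 0 (R + C), g y ∂μ := by
  have hsub : closedBall 0 R ⊆ (· - a) ⁻¹' closedBall (0 : G) (R + C) := fun x hx => by
    simp only [Set.mem_preimage, mem_closedBall_zero_iff] at hx ⊢
    exact (norm_sub_le x a).trans (add_le_add hx ha)
  calc ∫⁻ x in closedBall 0 R, g (x - a) ∂μ
      ≤ ∫⁻ x in (· - a) ⁻¹' closedBall (0 : G) (R + C), g (x - a) ∂μ := lintegral_mono_set hsub
    _ = ∫⁻ y in closedBall 0 (R + C), g y ∂μ :=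
      (measurePreserving_sub_right μ a).setLIntegral_comp_preimage_emb
        (MeasurableEquiv.subRight a).measurableEmbedding g _

theorem ae_tsum_mul_comp_sub_lt_top {g : G → ℝ≥0∞} (hg : AEMeasurable g μ)
    (hg_fin : ∀ R, ∫⁻ y in closedBall 0 R, g y ∂μ < ∞) {c : ℕ → ℝ≥0∞} (hc : ∑' n, c n ≠ ∞)
    {r : ℕ → G} (hr : Bornology.IsBounded (Set.range r)) :
    ∀ᵐ x ∂μ, ∑' n, c n * g (x - r n) < ∞ := by
  obtain ⟨C, hC⟩ := hr.exists_norm_le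
  rw [← Measure.restrict_univ (μ := μ), ← iUnion_closedBall_nat 0, ae_restrict_iUnion_iff]
  intro R
  have hmeas : ∀ n, AEMeasurable (fun x => g (x - r n)) (μ.restrict (closedBall 0 R)) :=
    fun n => (hg.comp_quasiMeasurePreserving
      (measurePreserving_sub_right μ (r n)).quasiMeasurePreserving).restrict
  have hint : ∫⁻ x in closedBall 0 R, ∑' n, c n * g (x - r n) ∂μ ≤
      (∑' n, c n) * ∫⁻ y in closedBall 0 (R + C), g y ∂μ :=
    calc ∫⁻ x in closedBall 0 R, ∑' n, c n * g (x - r n) ∂μ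
        = ∑' n, c n * ∫⁻ x in closedBall 0 R, g (x - r n) ∂μ := by
          rw [lintegral_tsum fun n => (hmeas n).const_mul _]
          exact tsum_congr fun n => lintegral_const_mul'' _ (hmeas n)
      _ ≤ ∑' n, c n * ∫⁻ y in closedBall 0 (R + C), g y ∂μ :=
          ENNReal.tsum_le_tsum fun n => mul_le_mul_right
            (setLIntegral_closedBall_comp_sub_le (hC _ (Set.mem_range_self n))) _
      _ = (∑' n, c n) * ∫⁻ y in closedBall 0 (R + C), g y ∂μ := ENNReal.tsum_mul_right
  exact ae_lt_top' (AEMeasurable.tsum fun n => (hmeas n).const_mul _)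
    (ne_top_of_le_ne_top (ENNReal.mul_ne_top hc (hg_fin (R + C)).ne) hint)

end Translates

theorem MeasureTheory.LocallyIntegrable.ae_summable_mul_comp_sub {G : Type*}
    [NormedAddCommGroup G] [ProperSpace G] [MeasurableSpace G] [MeasurableAdd G]
    {μ : Measure G} [μ.IsAddRightInvariant]
    {g : G → ℝ} (hg : LocallyIntegrable g μ) {c : ℕ → ℝ} (hc : Summable fun n => ‖c n‖)
    {r : ℕ → G} (hr : Bornology.IsBounded (Set.range r)) :
    ∀ᵐ x ∂μ, Summable fun n => c n * g (x - r n) := by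
  have hg_fin : ∀ R, ∫⁻ y in closedBall 0 R, ‖g y‖ₑ ∂μ < ∞ := fun R =>
    (hg.integrableOn_isCompact (isCompact_closedBall 0 R)).hasFiniteIntegral
  filter_upwards [ae_tsum_mul_comp_sub_lt_top hg.aestronglyMeasurable.enorm hg_fin
    (tsum_enorm_ne_top_iff_summable_norm.2 hc) hr] with x hx
  refine Summable.of_enorm ?_
  simpa only [enorm_mul] using hx.ne

/-- Lemma 4.3 of [GG]: for a square-summable `α` and a bounded real sequence `r`,
for a.e. `x ∉ {r n}` the series `∑ (log|r n - x|)² ‖α n‖²` converges. -/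
theorem stmt1 (α : ℕ → ℂ) (hα : Summable (fun n => ‖α n‖ ^ 2))
    (r : ℕ → ℝ) (hr : ∃ C, ∀ n, |r n| ≤ C) :
    ∀ᵐ x : ℝ, x ∉ Set.range r →
      Summable (fun n => (Real.log |r n - x|) ^ 2 * ‖α n‖ ^ 2) := by
  obtain ⟨C, hC⟩ := hr
  have hr_bdd : Bornology.IsBounded (Set.range r) :=
    isBounded_iff_forall_norm_le.2 ⟨C, Set.forall_mem_range.2 hC⟩
  have hc : Summable fun n => ‖‖α n‖ ^ 2‖ := by simpa only [norm_pow, norm_norm] using hα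
  have hlog := locallyIntegrable_log_norm_sq (E := ℝ) volume
  filter_upwards [hlog.ae_summable_mul_comp_sub hc hr_bdd] with x hx _
  simpa only [Real.norm_eq_abs, abs_sub_comm x, mul_comm] using hx
end

section
/- Define $r_{2^m+k} = -1 + 2^{-m} + k\,2^{-(m-1)}$ for $m \geq 0$, $0 \leq k \leq 2^m-1$, and let $(\gamma_m)_{m\geq 0}$ be a sequence of complex numbers with $\sum_{m\geq 0} 2^m |\gamma_m|^2 < \infty$ and $\sum_{m\geq 0} m\,2^m|\gamma_m|^2 = \infty$. Define $\alpha_n = \gamma_m$ for all $n \in \{2^m, \dots, 2^{m+1}-1\}$. Then $(\alpha_n)_{n\geq 1} \in \ell^2$, and for every $x \in (-1,1)$ the series $\sum_{n\geq 1} \frac{|\alpha_n|^2}{|r_n - x|}$ diverges. -/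
/-!
Both series are regrouped over the dyadic blocks `2^m ≤ n < 2^{m+1}`, on which `α` is constant.
The points `r (2^m + k)`, `k < 2^m`, are the midpoints of the `2^m` dyadic intervals of length
`2^{1-m}` in `[-1, 1]`, so `r (2^m + k) - x = 2^{1-m} (k - t)` for some `t ≥ 0` with
`2^m - t ≳ 2^m (1 - x) / 2`. Comparing with the harmonic series, the block sum of `1 / |r n - x|`
is at least `(2^m / 2) log (2^m - t) ≳ m 2^m`, so the regrouped second series dominates
`∑ m 2^m ‖γ m‖²`.
-/

open Finset Real Filter

theorem sum_range_two_pow {M : Type*} [AddCommMonoid M] (f : ℕ → M) (N : ℕ) :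
    ∑ n ∈ range (2 ^ N), f n
      = f 0 + ∑ m ∈ range N, ∑ k ∈ range (2 ^ m), f (2 ^ m + k) := by
  induction N with
  | zero => simp
  | succ N ih => rw [pow_succ, mul_two, sum_range_add, ih, sum_range_succ, add_assoc]

theorem summable_iff_summable_sum_dyadic_blocks {f : ℕ → ℝ} (hf : ∀ n, 0 ≤ f n) :
    Summable f ↔ Summable (fun m => ∑ k ∈ range (2 ^ m), f (2 ^ m + k)) := by
  have hblock : ∀ m, 0 ≤ ∑ k ∈ range (2 ^ m), f (2 ^ m + k) :=
    fun m => sum_nonneg fun k _ => hf _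
  constructor
  · intro hsum
    refine summable_of_sum_range_le (c := ∑' n, f n) hblock fun N => ?_
    calc ∑ m ∈ range N, ∑ k ∈ range (2 ^ m), f (2 ^ m + k)
        ≤ ∑ n ∈ range (2 ^ N), f n := by
          rw [sum_range_two_pow]; exact le_add_of_nonneg_left (hf 0)
      _ ≤ ∑' n, f n := hsum.sum_le_tsum _ fun n _ => hf n
  · intro hsum
    refine summable_of_sum_range_le
      (c := f 0 + ∑' m, ∑ k ∈ range (2 ^ m), f (2 ^ m + k)) hf fun N => ?_
    calc ∑ n ∈ range N, f n ≤ ∑ n ∈ range (2 ^ N), f n :=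
          sum_le_sum_of_subset_of_nonneg (range_subset_range.mpr Nat.lt_two_pow_self.le)
            fun n _ _ => hf n
      _ ≤ f 0 + ∑' m, ∑ k ∈ range (2 ^ m), f (2 ^ m + k) := by
          rw [sum_range_two_pow]
          exact add_le_add_right (hsum.sum_le_tsum _ fun m _ => hblock m) _

theorem log_le_sum_inv_abs_natCast_sub (N : ℕ) {t : ℝ} (ht : 0 ≤ t) (htN : t < N) :
    Real.log (N - t) ≤ ∑ k ∈ range N, 1 / |(k : ℝ) - t| := by
  set s := ⌊t⌋₊
  have hsN : s + 1 ≤ N := (Nat.floor_lt ht).mpr htN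
  have hs : (s : ℝ) ≤ t := Nat.floor_le ht
  have hts : t < s + 1 := Nat.lt_floor_add_one t
  -- keep only the terms with `k > t`, where `0 < k - t ≤ k - ⌊t⌋`, and compare with `harmonic`
  calc Real.log (N - t) ≤ Real.log ↑(N - (s + 1) + 1) := by
        gcongr
        rw [Nat.cast_add, Nat.cast_sub hsN]; push_cast; linarith
    _ ≤ ∑ j ∈ range (N - (s + 1)), 1 / ((j : ℝ) + 1) := by
        simpa [harmonic] using log_add_one_le_harmonic (N - (s + 1))
    _ ≤ ∑ j ∈ range (N - (s + 1)), 1 / |((s + 1 + j : ℕ) : ℝ) - t| := by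
        gcongr with j
        all_goals
          have hj : (0 : ℝ) ≤ j := j.cast_nonneg
          push_cast
          rw [abs_of_pos (by linarith)]
          linarith
    _ = ∑ k ∈ Ico (s + 1) N, 1 / |(k : ℝ) - t| := by rw [sum_Ico_eq_sum_range]
    _ ≤ ∑ k ∈ range N, 1 / |(k : ℝ) - t| :=
        sum_le_sum_of_subset_of_nonneg
          (fun k hk => by simp only [mem_Ico, mem_range] at hk ⊢; omega)
          fun _ _ _ => by positivity

noncomputable def dyadicMidpoint (m k : ℕ) : ℝ :=
  -1 + (2 : ℝ) ^ (-(m : ℤ)) + k * (2 : ℝ) ^ (1 - (m : ℤ))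

theorem dyadicMidpoint_sub (m k : ℕ) (x : ℝ) :
    dyadicMidpoint m k - x = 2 / 2 ^ m * (k - ((x + 1) * 2 ^ m - 1) / 2) := by
  rw [dyadicMidpoint, zpow_neg, zpow_sub₀ two_ne_zero, zpow_natCast, zpow_one]
  field_simp
  ring

theorem sum_inv_abs_dyadicMidpoint_sub (m : ℕ) (x : ℝ) :
    ∑ k ∈ range (2 ^ m), 1 / |dyadicMidpoint m k - x|
      = 2 ^ m / 2 * ∑ k ∈ range (2 ^ m), 1 / |(k : ℝ) - ((x + 1) * 2 ^ m - 1) / 2| := by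
  rw [mul_sum]
  refine sum_congr rfl fun k _ => ?_
  rw [dyadicMidpoint_sub, abs_mul, abs_of_pos (by positivity)]
  field_simp

theorem eventually_mul_two_pow_le_sum_inv_abs_dyadicMidpoint_sub {x : ℝ}
    (hx : x ∈ Set.Ioo (-1) 1) :
    ∀ᶠ m : ℕ in atTop,
      Real.log 2 / 4 * (m * 2 ^ m) ≤ ∑ k ∈ range (2 ^ m), 1 / |dyadicMidpoint m k - x| := by
  obtain ⟨hx1, hx2⟩ := hx
  have hlog2 : 0 < Real.log 2 := Real.log_pos one_lt_two
  filter_upwards [(tendsto_pow_atTop_atTop_of_one_lt one_lt_two).eventually_ge_atTop (1 / (x + 1)),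
    tendsto_natCast_atTop_atTop.eventually_ge_atTop (-2 * Real.log ((1 - x) / 2) / Real.log 2)]
    with m hm_pow hm
  set e : ℝ := 2 ^ m
  set t := ((x + 1) * e - 1) / 2
  have he : 0 < e := by positivity
  have ht : 0 ≤ t := by
    rw [div_le_iff₀ (by linarith)] at hm_pow
    simp only [t]
    linarith
  have hte : e * ((1 - x) / 2) ≤ e - t := by simp only [t]; linarith
  have hlog : m * Real.log 2 / 2 ≤ Real.log (e - t) := by
    calc m * Real.log 2 / 2 ≤ m * Real.log 2 + Real.log ((1 - x) / 2) := by
          rw [div_le_iff₀ hlog2] at hm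
          linarith
      _ = Real.log (e * ((1 - x) / 2)) := by
          rw [Real.log_mul he.ne' (by linarith), Real.log_pow]
      _ ≤ Real.log (e - t) := Real.log_le_log (by nlinarith) hte
  rw [sum_inv_abs_dyadicMidpoint_sub]
  calc Real.log 2 / 4 * (m * e) = e / 2 * (m * Real.log 2 / 2) := by ring
    _ ≤ e / 2 * ∑ k ∈ range (2 ^ m), 1 / |(k : ℝ) - t| := by
        gcongr
        refine hlog.trans ?_
        have htN : t < (2 ^ m : ℕ) := by push_cast; simp only [t]; nlinarith
        simpa [e] using log_le_sum_inv_abs_natCast_sub (2 ^ m) ht htN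

/-- The divergence example: with the dyadic sequence `r` and `α n = γ m` for
`2^m ≤ n ≤ 2^{m+1}-1`, where `∑ 2^m ‖γ m‖² < ∞` and `∑ m 2^m ‖γ m‖² = ∞`,
the sequence `α` is in `ℓ²` but `∑ ‖α n‖²/|r n - x|` diverges for every `x ∈ (-1,1)`. -/
theorem stmt5 (r : ℕ → ℝ)
    (hr : ∀ m k : ℕ, k < 2 ^ m →
      r (2 ^ m + k) = -1 + (2 : ℝ) ^ (-(m : ℤ)) + (k : ℝ) * (2 : ℝ) ^ (1 - (m : ℤ)))
    (γ : ℕ → ℂ)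
    (hγ1 : Summable (fun m : ℕ => (2 : ℝ) ^ m * ‖γ m‖ ^ 2))
    (hγ2 : ¬ Summable (fun m : ℕ => (m : ℝ) * 2 ^ m * ‖γ m‖ ^ 2))
    (α : ℕ → ℂ)
    (hα : ∀ m k : ℕ, k < 2 ^ m → α (2 ^ m + k) = γ m) :
    Summable (fun n : ℕ => ‖α (n + 1)‖ ^ 2) ∧
      ∀ x ∈ Set.Ioo (-1 : ℝ) 1,
        ¬ Summable (fun n : ℕ => ‖α (n + 1)‖ ^ 2 / |r (n + 1) - x|) := by
  constructor
  · rw [summable_nat_add_iff 1 (f := fun n => ‖α n‖ ^ 2),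
      summable_iff_summable_sum_dyadic_blocks fun n => sq_nonneg _]
    refine hγ1.congr fun m => ?_
    rw [sum_congr rfl fun k hk => by rw [hα m k (mem_range.mp hk)]]
    simp
  · rintro x hx hsum
    rw [summable_nat_add_iff 1 (f := fun n => ‖α n‖ ^ 2 / |r n - x|),
      summable_iff_summable_sum_dyadic_blocks fun n => by positivity] at hsum
    have hblock : ∀ m, ∑ k ∈ range (2 ^ m), ‖α (2 ^ m + k)‖ ^ 2 / |r (2 ^ m + k) - x|
        = ‖γ m‖ ^ 2 * ∑ k ∈ range (2 ^ m), 1 / |dyadicMidpoint m k - x| := fun m => by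
      rw [mul_sum]
      refine sum_congr rfl fun k hk => ?_
      rw [hα m k (mem_range.mp hk), hr m k (mem_range.mp hk), dyadicMidpoint, mul_one_div]
    refine hγ2 (.of_norm_bounded_eventually_nat (hsum.mul_left (4 / Real.log 2)) ?_)
    filter_upwards [eventually_mul_two_pow_le_sum_inv_abs_dyadicMidpoint_sub hx] with m hm
    rw [hblock, Real.norm_of_nonneg (by positivity)]
    calc (m : ℝ) * 2 ^ m * ‖γ m‖ ^ 2
        = 4 / Real.log 2 * (‖γ m‖ ^ 2 * (Real.log 2 / 4 * (m * 2 ^ m))) := by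
          field_simp
      _ ≤ _ := by gcongr
end

section
/- Let $T, \tilde{T}$ be bounded operators on a Hilbert space that are quasisimilar. If $\tilde{T}$ has a nontrivial closed hyperinvariant subspace, then so does $T$. Moreover, $\sigma_p(T) = \sigma_p(\tilde{T})$ is false in general, but if $\lambda$ is an eigenvalue of $\tilde{T}$ then $\lambda$ is an eigenvalue of $T$. -/
/-!
Let `M` be a nontrivial closed hyperinvariant subspace of `T̃`, and let `N` be the closed linear
span of all `A (X m)` with `A` commuting with `T` and `m ∈ M`. By construction `N` is closed and
hyperinvariant for `T`, and it is nonzero because `X` is injective. For every such `A` the operator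
`Y A X` commutes with `T̃`, so `Y` maps `N` into `M`; since `ker Y* = 0` gives `Y` dense range,
`N = H` would force `M = H`. The eigenvalue claim is the observation `T (X x) = X (T̃ x)`.
-/

open ContinuousLinearMap

namespace ContinuousLinearMap

section Hyperinvariant

variable {𝕜 E F : Type*} [NormedField 𝕜] [NormedAddCommGroup E] [NormedSpace 𝕜 E]
  [NormedAddCommGroup F] [NormedSpace 𝕜 F]

def IsHyperinvariant (T : E →L[𝕜] E) (M : Submodule 𝕜 E) : Prop :=
  ∀ S : E →L[𝕜] E, Commute S T → ∀ x ∈ M, S x ∈ M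

/-- The smallest closed subspace containing `s` and invariant under the commutant of `T`. -/
def hyperinvariantHull (T : E →L[𝕜] E) (s : Set E) : Submodule 𝕜 E :=
  (Submodule.span 𝕜 {y | ∃ A : E →L[𝕜] E, Commute A T ∧ ∃ x ∈ s, A x = y}).topologicalClosure

variable {T : E →L[𝕜] E} {T' : F →L[𝕜] F} {s : Set E}

theorem isClosed_hyperinvariantHull : IsClosed (hyperinvariantHull T s : Set E) :=
  Submodule.isClosed_topologicalClosure _

theorem subset_hyperinvariantHull : s ⊆ hyperinvariantHull T s := fun x hx =>
  Submodule.le_topologicalClosure _ (Submodule.subset_span ⟨1, Commute.one_left T, x, hx, rfl⟩)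

theorem hyperinvariantHull_le {M : Submodule 𝕜 E} (hM : IsClosed (M : Set E))
    (h : ∀ A : E →L[𝕜] E, Commute A T → ∀ x ∈ s, A x ∈ M) : hyperinvariantHull T s ≤ M := by
  refine Submodule.topologicalClosure_minimal _ ?_ hM
  rw [Submodule.span_le]
  rintro _ ⟨A, hA, x, hx, rfl⟩
  exact h A hA x hx

theorem isHyperinvariant_hyperinvariantHull : IsHyperinvariant T (hyperinvariantHull T s) :=
  fun S hS =>
    hyperinvariantHull_le (M := (hyperinvariantHull T s).comap (S : E →ₗ[𝕜] E))
      (isClosed_hyperinvariantHull.preimage S.continuous) fun A hA x hx =>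
        Submodule.le_topologicalClosure _
          (Submodule.subset_span ⟨S * A, hS.mul_left hA, x, hx, rfl⟩)

theorem commute_comp_comp_of_intertwining {X : F →L[𝕜] E} {Y : E →L[𝕜] F}
    (hTX : T ∘L X = X ∘L T') (hYT : Y ∘L T = T' ∘L Y) {A : E →L[𝕜] E} (hA : Commute A T) :
    Commute (Y ∘L A ∘L X) T' := by
  have hA' : A ∘L T = T ∘L A := hA.eq
  calc (Y ∘L A ∘L X) ∘L T' = Y ∘L A ∘L (T ∘L X) := by rw [hTX]; rfl
    _ = Y ∘L (A ∘L T) ∘L X := rfl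
    _ = (Y ∘L T) ∘L A ∘L X := by rw [hA']; rfl
    _ = T' ∘L (Y ∘L A ∘L X) := by rw [hYT]; rfl

theorem eq_top_of_denseRange_of_forall_mem {Y : E →L[𝕜] F} (hY : DenseRange Y)
    {M : Submodule 𝕜 F} (hM : IsClosed (M : Set F)) (h : ∀ x, Y x ∈ M) : M = ⊤ := by
  rw [eq_top_iff]
  intro y _
  have hclosure : closure (Set.range Y) ⊆ M := hM.closure_subset_iff.2 (Set.range_subset_iff.2 h)
  exact hclosure (hY.closure_range ▸ Set.mem_univ y)

theorem exists_isHyperinvariant_of_intertwining {X : F →L[𝕜] E} {Y : E →L[𝕜] F}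
    (hX : Function.Injective X) (hY : DenseRange Y)
    (hTX : T ∘L X = X ∘L T') (hYT : Y ∘L T = T' ∘L Y) {M : Submodule 𝕜 F}
    (hM_closed : IsClosed (M : Set F)) (hM_bot : M ≠ ⊥) (hM_top : M ≠ ⊤)
    (hM : IsHyperinvariant T' M) :
    ∃ N : Submodule 𝕜 E, IsClosed (N : Set E) ∧ N ≠ ⊥ ∧ N ≠ ⊤ ∧ IsHyperinvariant T N := by
  refine ⟨hyperinvariantHull T (X '' M), isClosed_hyperinvariantHull, ?_, ?_,
    isHyperinvariant_hyperinvariantHull⟩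
  · obtain ⟨m, hm, hm0⟩ := Submodule.exists_mem_ne_zero_of_ne_bot hM_bot
    exact (Submodule.ne_bot_iff _).2
      ⟨X m, subset_hyperinvariantHull ⟨m, hm, rfl⟩, (map_ne_zero_iff _ hX).2 hm0⟩
  · intro h_top
    have hY_hull : hyperinvariantHull T (X '' M) ≤ M.comap (Y : E →ₗ[𝕜] F) :=
      hyperinvariantHull_le (hM_closed.preimage Y.continuous) fun A hA _ ⟨m, hm, hxm⟩ =>
        hxm ▸ hM _ (commute_comp_comp_of_intertwining hTX hYT hA) m hm
    exact hM_top <| eq_top_of_denseRange_of_forall_mem hY hM_closed fun x =>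
      hY_hull (h_top ▸ Submodule.mem_top)

theorem apply_eq_smul_of_intertwining {X : F →L[𝕜] E} (hTX : T ∘L X = X ∘L T') {μ : 𝕜}
    {x : F} (hx : T' x = μ • x) : T (X x) = μ • X x := by
  rw [← comp_apply, hTX, comp_apply, hx, map_smul]

end Hyperinvariant

theorem denseRange_of_ker_adjoint_eq_bot {𝕜 E F : Type*} [RCLike 𝕜] [NormedAddCommGroup E]
    [InnerProductSpace 𝕜 E] [CompleteSpace E] [NormedAddCommGroup F] [InnerProductSpace 𝕜 F]
    [CompleteSpace F] {Y : E →L[𝕜] F} (h : LinearMap.ker (adjoint Y : F →ₗ[𝕜] E) = ⊥) :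
    DenseRange Y := by
  have hclosure := (adjoint Y).orthogonal_ker
  rw [adjoint_adjoint, h, Submodule.bot_orthogonal_eq_top, eq_comm,
    ← Submodule.dense_iff_topologicalClosure_eq_top] at hclosure
  exact hclosure

end ContinuousLinearMap

theorem stmt9_general {H : Type*} [NormedAddCommGroup H] [InnerProductSpace ℂ H] [CompleteSpace H]
    (T T' X Y : H →L[ℂ] H)
    (hX1 : LinearMap.ker (X : H →ₗ[ℂ] H) = ⊥)
    (hY2 : LinearMap.ker (adjoint Y : H →ₗ[ℂ] H) = ⊥)
    (hTX : T * X = X * T') (hYT : Y * T = T' * Y) :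
    ((∃ M : Submodule ℂ H, IsClosed (M : Set H) ∧ M ≠ ⊥ ∧ M ≠ ⊤ ∧
        ∀ S : H →L[ℂ] H, S * T' = T' * S → ∀ x ∈ M, S x ∈ M) →
      ∃ M : Submodule ℂ H, IsClosed (M : Set H) ∧ M ≠ ⊥ ∧ M ≠ ⊤ ∧
        ∀ S : H →L[ℂ] H, S * T = T * S → ∀ x ∈ M, S x ∈ M) ∧
    ∀ (μ : ℂ) (x : H), x ≠ 0 → T' x = μ • x → ∃ y : H, y ≠ 0 ∧ T y = μ • y := by
  have hX : Function.Injective X := LinearMap.ker_eq_bot.1 hX1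
  refine ⟨fun ⟨M, hM_closed, hM_bot, hM_top, hM⟩ => ?_, fun μ x hx hTx => ?_⟩
  · exact exists_isHyperinvariant_of_intertwining hX (denseRange_of_ker_adjoint_eq_bot hY2)
      hTX hYT hM_closed hM_bot hM_top hM
  · exact ⟨X x, (map_ne_zero_iff _ hX).2 hx, apply_eq_smul_of_intertwining hTX hTx⟩

/-- If `T` and `T̃` are quasisimilar bounded operators, a nontrivial closed hyperinvariant
subspace for `T̃` yields one for `T`, and every eigenvalue of `T̃` is an eigenvalue of `T`. -/
theorem stmt9 {H : Type*} [NormedAddCommGroup H] [InnerProductSpace ℂ H] [CompleteSpace H]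
    (T T' X Y : H →L[ℂ] H)
    (hX1 : LinearMap.ker (X : H →ₗ[ℂ] H) = ⊥) (hX2 : LinearMap.ker (adjoint X : H →ₗ[ℂ] H) = ⊥)
    (hY1 : LinearMap.ker (Y : H →ₗ[ℂ] H) = ⊥) (hY2 : LinearMap.ker (adjoint Y : H →ₗ[ℂ] H) = ⊥)
    (hTX : T * X = X * T') (hYT : Y * T = T' * Y) :
    ((∃ M : Submodule ℂ H, IsClosed (M : Set H) ∧ M ≠ ⊥ ∧ M ≠ ⊤ ∧
        ∀ S : H →L[ℂ] H, S * T' = T' * S → ∀ x ∈ M, S x ∈ M) →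
      ∃ M : Submodule ℂ H, IsClosed (M : Set H) ∧ M ≠ ⊥ ∧ M ≠ ⊤ ∧
        ∀ S : H →L[ℂ] H, S * T = T * S → ∀ x ∈ M, S x ∈ M) ∧
    ∀ (μ : ℂ) (x : H), x ≠ 0 → T' x = μ • x → ∃ y : H, y ≠ 0 ∧ T y = μ • y :=
  stmt9_general T T' X Y hX1 hY2 hTX hYT
end
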